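/- Let Ω ⊆ ℝⁿ be open and nonempty, h : Ω → ℝ continuous, and ρ : ℝⁿ → [0, ∞) an integrable probability density whose support is Ω. Define ψ(k) := log ∫_Ω ρ(y) exp(⟨k, y⟩ − h(y)) dy ∈ (−∞, +∞]. Then for every x in the convex hull ⟨Ω⟩ and every unit vector v ∈ ℝⁿ, there exist δ > 0 and C ∈ ℝ such that for all t ≥ 0: ⟨x, t v⟩ − ψ(t v) ≤ −δ t + C. In particular, for each x ∈ ⟨Ω⟩ the concave function k ↦ ⟨x, k⟩ − ψ(k) tends to −∞ along every ray from the origin. -/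
import Mathlib


open MeasureTheory
open scoped RealInnerProductSpace ENNReal

/-- The tilted log-moment-generating function
`ψ(k) = log ∫_Ω ρ(y) exp(⟨k,y⟩ − h(y)) dy`, with values in `EReal`. -/
noncomputable def psiTilt {n : ℕ} (Ω : Set (EuclideanSpace ℝ (Fin n)))
    (ρ h : EuclideanSpace ℝ (Fin n) → ℝ) (k : EuclideanSpace ℝ (Fin n)) : EReal :=
  ENNReal.log (∫⁻ y in Ω, ENNReal.ofReal (ρ y * Real.exp (⟪k, y⟫ - h y)))

/-- anti-coercivity estimate in the proof of Proposition 2, part 1.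
For every `x` in the convex hull of `Ω` and every unit direction `v`, the concave function
`k ↦ ⟨x,k⟩ − ψ(k)` decays linearly along the ray `t ↦ t v`. -/
theorem legendre_anticoercive (n : ℕ)
    (Ω : Set (EuclideanSpace ℝ (Fin n))) (hΩo : IsOpen Ω) (hΩne : Ω.Nonempty)
    (h : EuclideanSpace ℝ (Fin n) → ℝ) (hh : ContinuousOn h Ω)
    (ρ : EuclideanSpace ℝ (Fin n) → ℝ) (hρ0 : ∀ y, 0 ≤ ρ y)
    (hρint : Integrable ρ) (hρ1 : (∫ y, ρ y) = 1)
    (hρsupp : ∀ᵐ y, (y ∈ Ω → 0 < ρ y) ∧ (y ∉ Ω → ρ y = 0)) :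
    ∀ x ∈ convexHull ℝ Ω, ∀ v : EuclideanSpace ℝ (Fin n), ‖v‖ = 1 →
      ∃ δ > (0 : ℝ), ∃ C : ℝ, ∀ t : ℝ, 0 ≤ t →
        ((⟪x, t • v⟫ : ℝ) : EReal) - psiTilt Ω ρ h (t • v) ≤ ((-δ * t + C : ℝ) : EReal) := by
  intro x hx v hv
  have hvv : (⟪v, v⟫ : ℝ) = 1 := by
    rw [real_inner_self_eq_norm_sq, hv]; norm_num
  set s : ℝ := ⟪x, v⟫ with hs
  -- Step 1: find a point of Ω strictly beyond x in direction v
  have hy0 : ∃ y₀ ∈ Ω, s < ⟪y₀, v⟫ := by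
    by_contra hcon
    push_neg at hcon
    have hsub : Ω ⊆ {y | (⟪y, v⟫ : ℝ) < s} := by
      intro y hy
      obtain ⟨r, hr, hball⟩ := Metric.isOpen_iff.1 hΩo y hy
      have hmem : y + (r / 2) • v ∈ Ω := by
        apply hball
        rw [Metric.mem_ball, dist_self_add_left, norm_smul, hv]
        rw [Real.norm_eq_abs, abs_of_nonneg (by linarith)]
        linarith
      have h2 := hcon _ hmem
      rw [inner_add_left, real_inner_smul_left, hvv] at h2
      simp only [Set.mem_setOf_eq]
      linarith
    have hlin : IsLinearMap ℝ (fun y : EuclideanSpace ℝ (Fin n) => (⟪y, v⟫ : ℝ)) :=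
      ⟨fun a b => inner_add_left a b v, fun c a => real_inner_smul_left a v c⟩
    have hxs := convexHull_min hsub (convex_halfSpace_lt hlin s) hx
    simp only [Set.mem_setOf_eq] at hxs
    exact lt_irrefl _ hxs
  obtain ⟨y₀, hy₀Ω, hy₀⟩ := hy0
  set ε : ℝ := ⟪y₀, v⟫ - s with hεdef
  have hε : 0 < ε := by simp only [hεdef]; linarith
  -- Step 2: a small ball around y₀
  obtain ⟨r₁, hr₁, hball₁⟩ := Metric.isOpen_iff.1 hΩo y₀ hy₀Ω
  have hcont : ContinuousAt h y₀ := hh.continuousAt (hΩo.mem_nhds hy₀Ω)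
  have hnh : {y | h y < h y₀ + 1} ∈ nhds y₀ :=
    hcont.preimage_mem_nhds (Iio_mem_nhds (by linarith))
  obtain ⟨r₂, hr₂, hball₂⟩ := Metric.mem_nhds_iff.1 hnh
  set r : ℝ := min (min r₁ r₂) (ε / 2) with hrdef
  have hr : 0 < r := lt_min (lt_min hr₁ hr₂) (by linarith)
  set B := Metric.ball y₀ r with hBdef
  have hBΩ : B ⊆ Ω := fun y hy =>
    hball₁ (Metric.ball_subset_ball ((min_le_left _ _).trans (min_le_left _ _)) hy)
  have hBh : ∀ y ∈ B, h y < h y₀ + 1 := fun y hy =>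
    hball₂ (Metric.ball_subset_ball ((min_le_left _ _).trans (min_le_right _ _)) hy)
  set M : ℝ := h y₀ + 1 with hMdef
  set a : ℝ := s + ε / 2 with hadef
  have hBa : ∀ y ∈ B, a ≤ ⟪y, v⟫ := by
    intro y hy
    have h1 : (⟪y₀, v⟫ : ℝ) - ⟪y, v⟫ ≤ ‖y₀ - y‖ := by
      have h2 := real_inner_le_norm (y₀ - y) v
      rw [inner_sub_left, hv, mul_one] at h2
      linarith
    have h2 : ‖y₀ - y‖ < r := by
      rw [← dist_eq_norm, dist_comm]; exact hy
    have h3 : r ≤ ε / 2 := min_le_right _ _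
    have h4 : (⟪y₀, v⟫ : ℝ) = s + ε := by simp [hεdef]
    simp only [hadef]
    linarith
  -- mass of ρ on B
  set c : ℝ≥0∞ := ∫⁻ y in B, ENNReal.ofReal (ρ y) with hcdef
  have hmeasB : MeasurableSet B := measurableSet_ball
  have hmeas : AEMeasurable (fun y => ENNReal.ofReal (ρ y)) (volume.restrict B) :=
    (hρint.aemeasurable.restrict).ennreal_ofReal
  have hBpos : 0 < volume B := Metric.measure_ball_pos volume y₀ hr
  have hc0 : c ≠ 0 := by
    intro hc
    rw [hcdef, lintegral_eq_zero_iff' hmeas] at hc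
    have hae1 : ∀ᵐ y ∂(volume.restrict B), y ∈ Ω → 0 < ρ y :=
      ae_restrict_of_ae (hρsupp.mono fun y hy => hy.1)
    have hae2 : ∀ᵐ y ∂(volume.restrict B), y ∈ B := ae_restrict_mem hmeasB
    have hfalse : ∀ᵐ y ∂(volume.restrict B), False := by
      filter_upwards [hc, hae1, hae2] with y h1 h2 h3
      have hpos := h2 (hBΩ h3)
      simp only [Pi.zero_apply, ENNReal.ofReal_eq_zero] at h1
      linarith
    have hbot : volume.restrict B = 0 := ae_eq_bot.mp (Filter.eventually_false_iff_eq_bot.mp hfalse)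
    have : volume B = 0 := by
      rw [← Measure.restrict_apply_self, hbot]; rfl
    exact absurd this hBpos.ne'
  have hcT : c ≠ ⊤ := by
    have h1 : c ≤ ∫⁻ y, ENNReal.ofReal (ρ y) := setLIntegral_le_lintegral _ _
    rw [← ofReal_integral_eq_lintegral_ofReal hρint (Filter.Eventually.of_forall hρ0), hρ1] at h1
    exact ne_top_of_le_ne_top (by simp) h1
  set L : ℝ := Real.log c.toReal with hLdef
  have hlogc : ENNReal.log c = (L : EReal) := ENNReal.log_pos_real hc0 hcT
  -- conclusion
  refine ⟨ε / 2, by linarith, M - L, fun t ht => ?_⟩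
  -- lower bound on the integral
  have hI : ENNReal.ofReal (Real.exp (t * a - M)) * c ≤
      ∫⁻ y in Ω, ENNReal.ofReal (ρ y * Real.exp (⟪t • v, y⟫ - h y)) := by
    have h1 : ENNReal.ofReal (Real.exp (t * a - M)) * c =
        ∫⁻ y in B, ENNReal.ofReal (Real.exp (t * a - M)) * ENNReal.ofReal (ρ y) := by
      rw [hcdef, ← lintegral_const_mul'' _ hmeas]
    have h2 : (∫⁻ y in B, ENNReal.ofReal (Real.exp (t * a - M)) * ENNReal.ofReal (ρ y)) ≤
        ∫⁻ y in B, ENNReal.ofReal (ρ y * Real.exp (⟪t • v, y⟫ - h y)) := by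
      apply setLIntegral_mono' hmeasB
      intro y hy
      rw [← ENNReal.ofReal_mul (Real.exp_nonneg _), mul_comm]
      apply ENNReal.ofReal_le_ofReal
      apply mul_le_mul_of_nonneg_left _ (hρ0 y)
      apply Real.exp_le_exp.2
      have h3 : a ≤ ⟪y, v⟫ := hBa y hy
      have h4 : h y ≤ M := (hBh y hy).le
      have h5 : (⟪t • v, y⟫ : ℝ) = t * ⟪y, v⟫ := by
        rw [real_inner_smul_left, real_inner_comm]
      have h6 : t * a ≤ t * ⟪y, v⟫ := mul_le_mul_of_nonneg_left h3 ht
      linarith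
    have h3 : (∫⁻ y in B, ENNReal.ofReal (ρ y * Real.exp (⟪t • v, y⟫ - h y))) ≤
        ∫⁻ y in Ω, ENNReal.ofReal (ρ y * Real.exp (⟪t • v, y⟫ - h y)) :=
      lintegral_mono_set hBΩ
    exact h1 ▸ (h2.trans h3)
  have hψ : ((t * a - M + L : ℝ) : EReal) ≤ psiTilt Ω ρ h (t • v) := by
    have h1 := ENNReal.log_monotone hI
    rw [ENNReal.log_mul_add, ENNReal.log_ofReal_of_pos (Real.exp_pos _), Real.log_exp,
      hlogc] at h1
    refine le_trans (le_of_eq (by push_cast; ring)) h1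
  have hinner : (⟪x, t • v⟫ : ℝ) = t * s := by
    rw [real_inner_smul_right]
  calc ((⟪x, t • v⟫ : ℝ) : EReal) - psiTilt Ω ρ h (t • v)
      ≤ ((t * s : ℝ) : EReal) - ((t * a - M + L : ℝ) : EReal) := by
        rw [hinner]; exact EReal.sub_le_sub le_rfl hψ
    _ = ((t * s - (t * a - M + L) : ℝ) : EReal) := by rw [← EReal.coe_sub]
    _ = ((-(ε / 2) * t + (M - L) : ℝ) : EReal) := by
        norm_cast
        simp only [hadef]
        ring
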